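/- arXiv:1102.0037 — 5 statements merged into one kernel-verified Lean document; each statement's English description precedes it below -/
import Mathlib

section
/- Let n ≥ 4 be an even integer. Then gcd(2n, C(2n,3), C(2n,5), …, C(2n,n−3), 2^{n−1}) = 2^{v₂(n)+1}, where the binomial coefficients range over odd indices k with 3 ≤ k ≤ n−3 and v₂ denotes the 2-adic valuation. -/
/-!
Every odd `k` is a unit modulo `2 ^ (v₂ n + 1)`, which divides `2n`, so the identity
`(2n).choose k * k = 2n * (2n - 1).choose (k - 1)` makes `2 ^ (v₂ n + 1)` divide each odd
binomial coefficient; it also divides `2 ^ (n - 1)` since `2 ^ v₂ n ≤ n < 2 ^ (n - 1)`. Conversely,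
the gcd divides the power of two `2 ^ (n - 1)` and divides `2n`, so it divides the `2`-part
`2 ^ (v₂ n + 1)` of `2n`.
-/

namespace Nat

theorem dvd_choose_mul_self (m k : ℕ) : m ∣ m.choose k * k := by
  rcases k with _ | j
  · simp
  rcases m with _ | i
  · simp
  exact ⟨i.choose j, (add_one_mul_choose_eq i j).symm⟩

theorem Coprime.dvd_choose {d m k : ℕ} (hdk : d.Coprime k) (hdm : d ∣ m) : d ∣ m.choose k :=
  hdk.dvd_of_dvd_mul_right (hdm.trans (dvd_choose_mul_self m k))

end Nat

theorem dvd_pow_padicValNat_of_dvd_prime_pow {p k m d : ℕ} [hp : Fact p.Prime] (hm : m ≠ 0)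
    (hdp : d ∣ p ^ k) (hdm : d ∣ m) : d ∣ p ^ padicValNat p m := by
  obtain ⟨j, -, rfl⟩ := (Nat.dvd_prime_pow hp.out).mp hdp
  exact pow_dvd_pow p ((padicValNat_dvd_iff_le hm).mp hdm)

theorem padicValNat_two_add_two_le {n : ℕ} (hn : 3 ≤ n) : padicValNat 2 n + 2 ≤ n := by
  obtain ⟨m, rfl⟩ := Nat.exists_eq_add_of_le' hn
  have hpow_le : 2 ^ padicValNat 2 (m + 3) ≤ m + 3 :=
    Nat.le_of_dvd (by omega) pow_padicValNat_dvd
  have hlt_pow : m + 3 < 2 ^ (m + 2) := by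
    have := @Nat.lt_two_pow_self m
    rw [pow_add]
    omega
  have := (Nat.pow_lt_pow_iff_right (by norm_num)).mp (hpow_le.trans_lt hlt_pow)
  omega

theorem stmt_8_general (n : ℕ) (hn : 4 ≤ n) :
    Nat.gcd (2 * n)
      (Nat.gcd (((Finset.Icc 3 (n - 3)).filter (fun k => Odd k)).gcd
          (fun k => (2 * n).choose k))
        (2 ^ (n - 1))) = 2 ^ (padicValNat 2 n + 1) := by
  have hn0 : n ≠ 0 := by omega
  have hval : padicValNat 2 (2 * n) = padicValNat 2 n + 1 := by
    rw [padicValNat.mul two_ne_zero hn0, padicValNat.self one_lt_two, add_comm]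
  have hdvd_two_mul : 2 ^ (padicValNat 2 n + 1) ∣ 2 * n :=
    hval ▸ pow_padicValNat_dvd
  apply Nat.dvd_antisymm
  · rw [← hval]
    exact dvd_pow_padicValNat_of_dvd_prime_pow (by omega)
      ((Nat.gcd_dvd_right _ _).trans (Nat.gcd_dvd_right _ _)) (Nat.gcd_dvd_left _ _)
  · have hodd_choose : ∀ k ∈ (Finset.Icc 3 (n - 3)).filter (fun k => Odd k),
        2 ^ (padicValNat 2 n + 1) ∣ (2 * n).choose k := fun k hk =>
      ((Nat.coprime_two_left.mpr (Finset.mem_filter.mp hk).2).pow_left _).dvd_choose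
        hdvd_two_mul
    have hle : padicValNat 2 n + 1 ≤ n - 1 := by
      have := padicValNat_two_add_two_le (n := n) (by omega)
      omega
    exact Nat.dvd_gcd hdvd_two_mul
      (Nat.dvd_gcd (Finset.dvd_gcd hodd_choose) (pow_dvd_pow 2 hle))

theorem stmt_8 (n : ℕ) (hn : 4 ≤ n) (hne : Even n) :
    Nat.gcd (2 * n)
      (Nat.gcd (((Finset.Icc 3 (n - 3)).filter (fun k => Odd k)).gcd
          (fun k => (2 * n).choose k))
        (2 ^ (n - 1))) = 2 ^ (padicValNat 2 n + 1) :=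
  stmt_8_general n hn
end

section
/- For every i ≥ 1, the subgroup of ℤ generated by all products C(2, n₁)·C(2, n₂)⋯C(2, n_m)·2^{n₁+⋯+n_m−1}, where m ≥ 1, each nⱼ ≥ 1, and n₁+⋯+n_m ≥ i, equals 2^{2⌈i/2⌉−1}ℤ. -/
theorem stmt_10 (i : ℕ) (hi : 1 ≤ i) :
    AddSubgroup.closure {z : ℤ | ∃ (m : ℕ) (n : Fin m → ℕ), 1 ≤ m ∧ (∀ j, 1 ≤ n j) ∧
        i ≤ ∑ j, n j ∧
        z = (∏ j, (Nat.choose 2 (n j) : ℤ)) * 2 ^ ((∑ j, n j) - 1)} =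
      AddSubgroup.zmultiples ((2 : ℤ) ^ (2 * ((i + 1) / 2) - 1)) := by
  apply le_antisymm
  · rw [AddSubgroup.closure_le]
    rintro z ⟨m, n, hm, hn1, hsum, rfl⟩
    rw [SetLike.mem_coe, Int.mem_zmultiples_iff]
    by_cases h3 : ∃ j, 3 ≤ n j
    · obtain ⟨j, hj⟩ := h3
      have : (Nat.choose 2 (n j) : ℤ) = 0 := by
        rw [Nat.choose_eq_zero_of_lt (by omega)]; rfl
      rw [Finset.prod_eq_zero (Finset.mem_univ j) this, zero_mul]
      exact dvd_zero _
    · push_neg at h3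
      have hle : ∀ j, n j ≤ 2 := fun j => by have := h3 j; omega
      have hprod : (∏ j, (Nat.choose 2 (n j) : ℤ)) = 2 ^ (∑ j, (2 - n j)) := by
        rw [← Finset.prod_pow_eq_pow_sum]
        apply Finset.prod_congr rfl
        intro j _
        have h1 := hn1 j
        have h2 := hle j
        interval_cases h : n j <;> simp
      have hS2m : ∑ j, n j ≤ 2 * m := by
        calc ∑ j, n j ≤ ∑ _j : Fin m, 2 := Finset.sum_le_sum (fun j _ => hle j)
        _ = 2 * m := by simp [mul_comm]
      have hA : (∑ j, (2 - n j)) + ∑ j, n j = 2 * m := by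
        rw [← Finset.sum_add_distrib]
        calc ∑ j, (2 - n j + n j) = ∑ _j : Fin m, 2 :=
              Finset.sum_congr rfl (fun j _ => by have := hle j; omega)
        _ = 2 * m := by simp [mul_comm]
      have hS1 : 1 ≤ ∑ j, n j := le_trans hi hsum
      rw [hprod, ← pow_add]
      apply pow_dvd_pow
      omega
  · rw [AddSubgroup.zmultiples_le]
    apply AddSubgroup.subset_closure
    rcases Nat.even_or_odd i with ⟨t, ht⟩ | ⟨t, ht⟩
    · -- i = 2t, t ≥ 1 : all n j = 2, m = t
      refine ⟨t, fun _ => 2, by omega, fun _ => by norm_num, ?_, ?_⟩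
      · simp [mul_comm]; omega
      · simp
        congr 1
        omega
    · -- i = 2t+1 : n = cons 1 (fun _ => 2), m = t+1
      refine ⟨t + 1, (Fin.cons 1 (fun _ => 2) : Fin (t+1) → ℕ), by omega, ?_, ?_, ?_⟩
      · intro j
        refine Fin.cases ?_ ?_ j <;> simp
      · rw [Fin.sum_univ_succ]; simp; omega
      · rw [Fin.sum_univ_succ, Fin.prod_univ_succ]
        simp
        rw [← pow_succ']
        congr 1
        omega
end

section
/- In the ring R = ℤ[X]/(X² − 2X, 8X), let x denote the image of X. The ideal generated by 2x is, as an abelian group, cyclic of order 4, and the quotient of this ideal by the ideal generated by 8x is isomorphic to ℤ/4ℤ. -/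
/-! Every element of `R` is `p(x)` for an integer polynomial `p`, and `x² = 2x` gives
`p(x) · x = p(2) · x`; hence the ideal `(2x)` is the cyclic group generated by `2x`. Its order
is `4`: `8x = 0`, while `4x ≠ 0` because `X ↦ 2` induces a ring map `R → ℤ/16` sending `4x` to `8`.
Since `8x = 0`, the second quotient is a quotient by the zero subgroup. -/

open Polynomial

noncomputable def AddSubgroup.zmultiplesEquivZModAddOrderOf {G : Type*} [AddGroup G] (g : G) :
    zmultiples g ≃+ ZMod (addOrderOf g) :=
  (AddEquiv.addSubgroupCongr (range_zmultiplesHom g).symm).trans <|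
    (QuotientAddGroup.quotientKerEquivRange _).symm.trans <|
    (QuotientAddGroup.quotientAddEquivOfEq (zmultiplesHom_ker_eq g)).trans <|
    Int.quotientZMultiplesNatEquivZMod _

theorem Polynomial.aeval_mul_eq_of_mul_self_eq {R S : Type*} [CommRing R] [CommRing S]
    [Algebra R S] {x : S} {c : R} (hx : x * x = c • x) (p : R[X]) :
    aeval x p * x = p.eval c • x := by
  obtain ⟨q, hq⟩ := X_sub_C_dvd_sub_C_eval (a := c) (p := p)
  have hvanish : aeval x (p - C (p.eval c)) * x = 0 := by
    rw [hq, map_mul, mul_right_comm]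
    simp [sub_mul, hx, Algebra.smul_def]
  simpa [sub_mul, sub_eq_zero, Algebra.smul_def] using hvanish

theorem Ideal.toAddSubgroup_span_singleton_mul_eq_zmultiples {S : Type*} [CommRing S] {x : S}
    {c : ℤ} (hx : x * x = c * x) (hgen : Function.Surjective (aeval x : ℤ[X] →ₐ[ℤ] S)) (a : S) :
    (Ideal.span {a * x}).toAddSubgroup = AddSubgroup.zmultiples (a * x) := by
  ext y
  rw [Submodule.mem_toAddSubgroup, Ideal.mem_span_singleton', AddSubgroup.mem_zmultiples_iff]
  constructor
  · rintro ⟨r, rfl⟩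
    obtain ⟨p, rfl⟩ := hgen r
    refine ⟨p.eval c, ?_⟩
    have hx' : x * x = c • x := by rw [hx, zsmul_eq_mul]
    rw [mul_left_comm, aeval_mul_eq_of_mul_self_eq hx' p, mul_smul_comm]
  · rintro ⟨n, rfl⟩
    exact ⟨n, (zsmul_eq_mul _ _).symm⟩

namespace QuotientXSqSubTwoX

noncomputable abbrev I : Ideal ℤ[X] := Ideal.span {X ^ 2 - 2 * X, 8 * X}

abbrev R : Type := ℤ[X] ⧸ I

noncomputable abbrev x : R := Ideal.Quotient.mk I X

theorem x_mul_x : x * x = 2 * x := by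
  have h : Ideal.Quotient.mk I (X ^ 2 - 2 * X) = 0 :=
    Ideal.Quotient.eq_zero_iff_mem.mpr (Ideal.subset_span (by simp))
  simpa [pow_two, map_ofNat, sub_eq_zero] using h

theorem eight_mul_x : 8 * x = 0 := by
  have h : Ideal.Quotient.mk I (8 * X) = 0 :=
    Ideal.Quotient.eq_zero_iff_mem.mpr (Ideal.subset_span (by simp))
  simpa [map_ofNat] using h

theorem aeval_x_surjective : Function.Surjective (aeval x : ℤ[X] →ₐ[ℤ] R) := by
  intro r
  obtain ⟨p, rfl⟩ := Ideal.Quotient.mk_surjective r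
  exact ⟨p, by simpa using aeval_algHom_apply (Ideal.Quotient.mkₐ ℤ I) X p⟩

noncomputable def evalTwo : R →+* ZMod 16 :=
  Ideal.Quotient.lift I (eval₂RingHom (Int.castRingHom (ZMod 16)) 2) <| by
    refine fun p hp ↦ RingHom.mem_ker.mp <| (Ideal.span_le (I := RingHom.ker _)).mpr ?_ hp
    rintro q (rfl | rfl)
    · simp [RingHom.mem_ker]
    · simp [RingHom.mem_ker]
      rfl

theorem evalTwo_x : evalTwo x = 2 := by
  rw [evalTwo, x, Ideal.Quotient.lift_mk, coe_eval₂RingHom, eval₂_X]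

theorem addOrderOf_two_mul_x : addOrderOf (2 * x) = 4 := by
  have : Fact (Nat.Prime 2) := ⟨Nat.prime_two⟩
  have hfour_ne : (2 : ℕ) ^ 1 • (2 * x) ≠ 0 := fun h ↦ by
    have := congrArg evalTwo h
    simp only [pow_one, nsmul_eq_mul, Nat.cast_ofNat, map_mul, map_ofNat, evalTwo_x, map_zero] at this
    exact absurd this (by decide)
  have height_eq : (2 : ℕ) ^ (1 + 1) • (2 * x) = 0 := by
    rw [nsmul_eq_mul, ← eight_mul_x]
    norm_num [← mul_assoc]
  exact addOrderOf_eq_prime_pow hfour_ne height_eq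

end QuotientXSqSubTwoX

open Polynomial in
theorem stmt_11 :
    let R := ℤ[X] ⧸ Ideal.span ({X ^ 2 - 2 * X, 8 * X} : Set ℤ[X])
    let x : R := Ideal.Quotient.mk _ X
    Nonempty ((Ideal.span ({2 * x} : Set R)) ≃+ ZMod 4) ∧
    Nonempty (((Ideal.span ({2 * x} : Set R)).toAddSubgroup ⧸
        ((Ideal.span ({8 * x} : Set R)).toAddSubgroup.addSubgroupOf
          (Ideal.span ({2 * x} : Set R)).toAddSubgroup)) ≃+ ZMod 4) := by
  open QuotientXSqSubTwoX in
  intro R x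
  have e : (Ideal.span ({2 * x} : Set R)).toAddSubgroup ≃+ ZMod 4 :=
    (AddEquiv.addSubgroupCongr
      (Ideal.toAddSubgroup_span_singleton_mul_eq_zmultiples x_mul_x aeval_x_surjective 2)).trans <|
      (AddSubgroup.zmultiplesEquivZModAddOrderOf (2 * x)).trans
        (ZMod.ringEquivCongr addOrderOf_two_mul_x).toAddEquiv
  have hbot : (Ideal.span ({8 * x} : Set R)).toAddSubgroup.addSubgroupOf
      (Ideal.span ({2 * x} : Set R)).toAddSubgroup = ⊥ := by
    rw [Ideal.span_singleton_eq_bot.mpr eight_mul_x, Submodule.bot_toAddSubgroup,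
      AddSubgroup.bot_addSubgroupOf]
  exact ⟨⟨e⟩, ⟨(QuotientAddGroup.quotientAddEquivOfEq hbot).trans
    (QuotientAddGroup.quotientBot.trans e)⟩⟩
end

section
/- For every integer d ≥ 1, the additive group of the ring ℤ[X]/(X² − 2X, dX) is isomorphic to ℤ ⊕ ℤ/dℤ. -/
open Polynomial in
theorem stmt_13 (d : ℕ) (hd : 1 ≤ d) :
    Nonempty ((ℤ[X] ⧸ Ideal.span ({X ^ 2 - 2 * X, (d : ℤ[X]) * X} : Set ℤ[X])) ≃+
      ℤ × ZMod d) := by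
  haveI : NeZero d := ⟨by omega⟩
  set I : Ideal ℤ[X] := Ideal.span ({X ^ 2 - 2 * X, (d : ℤ[X]) * X} : Set ℤ[X]) with hI
  set Q := ℤ[X] ⧸ I with hQ
  let mk : ℤ[X] →+* Q := Ideal.Quotient.mk I
  -- additive hom ℤ →+ Q, n ↦ n • mk X
  let h : ℤ →+ Q := AddMonoidHom.mk' (fun n => n • mk X) (fun a b => add_zsmul _ a b)
  have hdX : (d : ℤ[X]) * X ∈ I := Ideal.subset_span (by simp)
  have hh : h (d : ℤ) = 0 := by
    show (d : ℤ) • mk X = 0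
    rw [zsmul_eq_mul, ← map_intCast mk, ← map_mul]
    refine Ideal.Quotient.eq_zero_iff_mem.mpr ?_
    have : ((d : ℤ) : ℤ[X]) = (d : ℤ[X]) := by push_cast; ring
    rw [this]; exact hdX
  let g : ZMod d →+ Q := ZMod.lift d ⟨h, hh⟩
  let f : ℤ →+ Q := AddMonoidHom.mk' (fun n => n • mk 1) (fun a b => add_zsmul _ a b)
  let ψ : ℤ × ZMod d →+ Q := f.coprod g
  have hψ : ∀ (a m : ℤ), ψ (a, ((m : ℤ) : ZMod d)) = mk (C a + C m * X) := by
    intro a m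
    show a • mk 1 + g ((m : ℤ) : ZMod d) = _
    rw [show g ((m : ℤ) : ZMod d) = h m from ZMod.lift_coe d ⟨h, hh⟩ m]
    show a • mk 1 + m • mk X = _
    rw [zsmul_eq_mul, zsmul_eq_mul, ← map_intCast mk a, ← map_intCast mk m,
      ← map_mul, ← map_mul, ← map_add]
    congr 1 <;> norm_num
  have key : ∀ a m : ℤ, (C a + C m * X ∈ I) → a = 0 ∧ (d : ℤ) ∣ m := by
    intro a m hmem
    rw [hI, Ideal.mem_span_pair] at hmem
    obtain ⟨u, v, huv⟩ := hmem
    have h0 := congrArg (Polynomial.eval 0) huv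
    have h2 := congrArg (Polynomial.eval 2) huv
    simp [Polynomial.eval_add, Polynomial.eval_mul] at h0 h2
    constructor
    · linarith [h0]
    · refine ⟨Polynomial.eval 2 v, by linarith [h2]⟩
  refine ⟨(AddEquiv.ofBijective ψ ⟨?_, ?_⟩).symm⟩
  · -- injective
    rw [injective_iff_map_eq_zero]
    rintro ⟨a, b⟩ hab
    have hb : b = ((b.val : ℤ) : ZMod d) := by
      push_cast
      exact (ZMod.natCast_rightInverse b).symm
    rw [hb, hψ] at hab
    have hmem : C a + C (b.val : ℤ) * X ∈ I := Ideal.Quotient.eq_zero_iff_mem.mp hab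
    obtain ⟨ha, hdvd⟩ := key _ _ hmem
    have hlt : b.val < d := ZMod.val_lt b
    have hbval : (b.val : ℤ) = 0 := by
      rcases Nat.eq_zero_or_pos b.val with h0 | hpos
      · exact_mod_cast h0
      · have := Int.le_of_dvd (by exact_mod_cast hpos) hdvd
        omega
    have hb0 : b = 0 := by
      rw [hb, hbval]; simp
    simp [ha, hb0]
  · -- surjective
    intro q
    obtain ⟨p, rfl⟩ := Ideal.Quotient.mk_surjective q
    set c : ℤ := (p.divX).eval 2 with hc
    refine ⟨(p.eval 0, ((c : ℤ) : ZMod d)), ?_⟩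
    rw [hψ]
    refine (Ideal.Quotient.mk_eq_mk_iff_sub_mem _ _).mpr ?_
    obtain ⟨r, hr⟩ : (X - C (2:ℤ)) ∣ (p.divX - C c) := X_sub_C_dvd_sub_C_eval
    have hp : p = X * p.divX + C (p.eval 0) := by
      conv_lhs => rw [← X_mul_divX_add p, Polynomial.coeff_zero_eq_eval_zero]
    have hC2 : (C 2 : ℤ[X]) = 2 := by simp
    rw [hC2] at hr
    rw [hI, Ideal.mem_span_pair]
    exact ⟨-r, 0, by linear_combination hp + (X : ℤ[X]) * hr⟩
end

section
/- The additive group of the ring ℤ[X,Y]/(X² − 2X, Y² − 2Y, 8X, 8Y, 8XY) is isomorphic to ℤ ⊕ (ℤ/8ℤ)³. -/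
/-!
Write `x`, `y` for the classes of `X 0`, `X 1`. Since `x² = 2x` and `y² = 2y`, the quotient is
spanned over `ℤ` by `1, x, y, xy`, and since `8x = 8y = 0` the map
`(a, b, c, d) ↦ a + bx + cy + dxy` is a well-defined surjection from `ℤ × (ℤ/8)³`.
It is injective because `x ↦ (0, 1 - e^(1,0))`, `y ↦ (0, 1 - e^(0,1))` defines a ring map into
`ℤ × (ℤ/8)[ℤ/2 × ℤ/2]`: `(1 - e^σ)² = 2(1 - e^σ)` as `2σ = 0`, and the images of `1, x, y, xy`
are unitriangular in the basis `e^g` of the group ring.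
-/

open MvPolynomial AddMonoidAlgebra

def ZMod.mulRightHom {A : Type*} [Ring A] {n : ℕ} (a : A) (ha : (n : A) * a = 0) :
    ZMod n →+ A :=
  ZMod.lift n ⟨(AddMonoidHom.mulRight a).comp (Int.castAddHom A), by simpa using ha⟩

lemma ZMod.mulRightHom_intCast {A : Type*} [Ring A] {n : ℕ} (a : A) (ha : (n : A) * a = 0)
    (k : ℤ) : ZMod.mulRightHom a ha k = k * a :=
  ZMod.lift_coe _ _ k

namespace PGO8

abbrev relations : Set (MvPolynomial (Fin 2) ℤ) :=
  {(X 0) ^ 2 - 2 * X 0, (X 1) ^ 2 - 2 * X 1, 8 * X 0, 8 * X 1, 8 * (X 0 * X 1)}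

abbrev Q := MvPolynomial (Fin 2) ℤ ⧸ Ideal.span relations

noncomputable abbrev mk : MvPolynomial (Fin 2) ℤ →+* Q := Ideal.Quotient.mk _

noncomputable def x : Q := mk (X 0)

noncomputable def y : Q := mk (X 1)

lemma mk_eq_zero_of_mem {p : MvPolynomial (Fin 2) ℤ} (hp : p ∈ relations) : mk p = 0 :=
  Ideal.Quotient.eq_zero_iff_mem.mpr (Ideal.subset_span hp)

lemma x_mul_x : x * x = 2 * x := by
  have h := mk_eq_zero_of_mem (p := X 0 ^ 2 - 2 * X 0) (by simp)
  rwa [map_sub, map_mul, map_pow, map_ofNat, sub_eq_zero, sq] at h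

lemma y_mul_y : y * y = 2 * y := by
  have h := mk_eq_zero_of_mem (p := X 1 ^ 2 - 2 * X 1) (by simp)
  rwa [map_sub, map_mul, map_pow, map_ofNat, sub_eq_zero, sq] at h

lemma eight_mul_x : (8 : Q) * x = 0 := by
  have h := mk_eq_zero_of_mem (p := 8 * X 0) (by simp)
  rwa [map_mul, map_ofNat] at h

lemma eight_mul_y : (8 : Q) * y = 0 := by
  have h := mk_eq_zero_of_mem (p := 8 * X 1) (by simp)
  rwa [map_mul, map_ofNat] at h

lemma eight_mul_x_mul_y : (8 : Q) * (x * y) = 0 := by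
  rw [← mul_assoc, eight_mul_x, zero_mul]

lemma exists_eq_intCast_add (q : Q) :
    ∃ a b c d : ℤ, q = a + b * x + c * y + d * (x * y) := by
  obtain ⟨p, rfl⟩ := Ideal.Quotient.mk_surjective q
  induction p using MvPolynomial.induction_on with
  | C a => exact ⟨a, 0, 0, 0, by simp [eq_intCast]⟩
  | add p p' hp hp' =>
    obtain ⟨a, b, c, d, hp⟩ := hp
    obtain ⟨a', b', c', d', hp'⟩ := hp'
    exact ⟨a + a', b + b', c + c', d + d', by rw [map_add, hp, hp']; push_cast; ring⟩
  | mul_X p i hp =>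
    obtain ⟨a, b, c, d, hp⟩ := hp
    rw [map_mul, hp]
    fin_cases i
    · refine ⟨0, a + 2 * b, 0, c + 2 * d, ?_⟩
      change _ * x = _
      push_cast
      linear_combination (b + d * y) * x_mul_x
    · refine ⟨0, 0, a + 2 * c, b + 2 * d, ?_⟩
      change _ * y = _
      push_cast
      linear_combination (c + d * x) * y_mul_y

noncomputable def Ψ : ℤ × ZMod 8 × ZMod 8 × ZMod 8 →+ Q :=
  (Int.castAddHom Q).coprod <| (ZMod.mulRightHom x (by exact_mod_cast eight_mul_x)).coprod <|
    (ZMod.mulRightHom y (by exact_mod_cast eight_mul_y)).coprod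
      (ZMod.mulRightHom (x * y) (by exact_mod_cast eight_mul_x_mul_y))

lemma Ψ_intCast (a b c d : ℤ) :
    Ψ (a, b, c, d) = a + b * x + c * y + d * (x * y) := by
  simp only [Ψ, AddMonoidHom.coprod_apply, ZMod.mulRightHom_intCast, Int.coe_castAddHom]
  abel

lemma Ψ_surjective : Function.Surjective Ψ := by
  intro q
  obtain ⟨a, b, c, d, rfl⟩ := exists_eq_intCast_add q
  exact ⟨(a, b, c, d), Ψ_intCast a b c d⟩

abbrev V := ZMod 2 × ZMod 2

lemma single_mul_single_self (g : V) : (single g 1 : (ZMod 8)[V]) * single g 1 = 1 := by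
  rw [single_mul_single, AddMonoidAlgebra.one_def, mul_one]
  congr 1
  revert g
  decide

lemma eight_eq_zero : (8 : (ZMod 8)[V]) = 0 := by
  have h : (8 : ZMod 8) = 0 := rfl
  rw [← map_ofNat (algebraMap (ZMod 8) (ZMod 8)[V]), h, map_zero]

noncomputable def oneSubSingle (g : V) : ℤ × (ZMod 8)[V] := (0, 1 - single g 1)

lemma oneSubSingle_mul_self (g : V) :
    oneSubSingle g * oneSubSingle g = 2 * oneSubSingle g := by
  refine Prod.ext (by simp [oneSubSingle]) ?_
  simp only [oneSubSingle, Prod.snd_mul, Prod.snd_ofNat]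
  linear_combination single_mul_single_self g

lemma eight_mul_oneSubSingle (g : V) : 8 * oneSubSingle g = 0 := by
  refine Prod.ext (by simp [oneSubSingle]) ?_
  simp only [oneSubSingle, Prod.snd_mul, Prod.snd_ofNat, eight_eq_zero, zero_mul, Prod.snd_zero]

noncomputable def Φ₀ : MvPolynomial (Fin 2) ℤ →+* ℤ × (ZMod 8)[V] :=
  eval₂Hom (Int.castRingHom _) ![oneSubSingle (1, 0), oneSubSingle (0, 1)]

lemma span_relations_le_ker : Ideal.span relations ≤ RingHom.ker Φ₀ := by
  rw [Ideal.span_le]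
  rintro p (rfl | rfl | rfl | rfl | rfl) <;>
    simp [Φ₀, sq, oneSubSingle_mul_self, eight_mul_oneSubSingle, ← mul_assoc]

noncomputable def Φ : Q →+* ℤ × (ZMod 8)[V] :=
  Ideal.Quotient.lift _ Φ₀ fun _ hp ↦ span_relations_le_ker hp

lemma Φ_x : Φ x = oneSubSingle (1, 0) := by
  simp [Φ, x, Φ₀]

lemma Φ_y : Φ y = oneSubSingle (0, 1) := by
  simp [Φ, y, Φ₀]

lemma eq_zero_of_combination_oneSubSingle_eq_zero {a b c d : ℤ}
    (h : (a : ℤ × (ZMod 8)[V]) + b * oneSubSingle (1, 0) + c * oneSubSingle (0, 1)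
      + d * (oneSubSingle (1, 0) * oneSubSingle (0, 1)) = 0) :
    a = 0 ∧ (b : ZMod 8) = 0 ∧ (c : ZMod 8) = 0 ∧ (d : ZMod 8) = 0 := by
  simp only [oneSubSingle, Prod.ext_iff, Prod.fst_add, Prod.snd_add, Prod.fst_mul, Prod.snd_mul,
    Prod.fst_intCast, Prod.snd_intCast, mul_zero, add_zero, Prod.fst_zero, Prod.snd_zero] at h
  obtain ⟨ha, hv⟩ := h
  simp only [intCast_def, AddMonoidAlgebra.one_def, mul_sub, sub_mul, single_mul_single, mul_one,
    add_zero] at hv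
  have coeff_eq_zero (g : V) := congrArg (AddMonoidAlgebra.coeff · g) hv
  have hd : (d : ZMod 8) = 0 := by simpa using coeff_eq_zero (1, 1)
  have hbd : -(b : ZMod 8) + -d = 0 := by simpa using coeff_eq_zero (1, 0)
  have hcd : -(c : ZMod 8) + -d = 0 := by simpa using coeff_eq_zero (0, 1)
  exact ⟨ha, by linear_combination -hbd - hd, by linear_combination -hcd - hd, hd⟩

lemma Ψ_injective : Function.Injective Ψ := by
  refine (injective_iff_map_eq_zero Ψ).mpr ?_
  rintro ⟨a, b, c, d⟩ h
  obtain ⟨b, rfl⟩ := ZMod.intCast_surjective b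
  obtain ⟨c, rfl⟩ := ZMod.intCast_surjective c
  obtain ⟨d, rfl⟩ := ZMod.intCast_surjective d
  have h := congrArg Φ h
  simp only [Ψ_intCast, map_add, map_mul, map_intCast, Φ_x, Φ_y, map_zero] at h
  obtain ⟨rfl, hb, hc, hd⟩ := eq_zero_of_combination_oneSubSingle_eq_zero h
  simp [hb, hc, hd]

end PGO8

open MvPolynomial in
theorem stmt_15 :
    Nonempty ((MvPolynomial (Fin 2) ℤ ⧸ Ideal.span
        ({(X 0) ^ 2 - 2 * X 0, (X 1) ^ 2 - 2 * X 1, 8 * X 0, 8 * X 1,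
          8 * (X 0 * X 1)} : Set (MvPolynomial (Fin 2) ℤ))) ≃+
      ℤ × (ZMod 8 × ZMod 8 × ZMod 8)) :=
  ⟨(AddEquiv.ofBijective PGO8.Ψ ⟨PGO8.Ψ_injective, PGO8.Ψ_surjective⟩).symm⟩
end
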